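/- For every integer N ≥ 1, h = 1/N and every z ∈ [0,1], the minimum of the quadratic form Q_1(C) = −( Σ_{β=0}^N Σ_{γ=0}^N C_β C_γ G_1(hβ − hγ) − 2 Σ_{β=0}^N C_β G_1(z − hβ) ) over all C ∈ ℝ^{N+1} with Σ_{β=0}^N C_β e^{−hβ} = e^{−z} is attained at C = C̊(z) and equals (1/4) Σ_{β=0}^N C̊_β(z) · sgn(z − hβ) · (e^{z−hβ} − e^{hβ−z}). (This value is the squared norm of the error functional of the optimal interpolation formula on W_2^{(1,0)}(0,1).) -/

import Mathlib

/-- `G₁(x) = sgn(x)·(eˣ − e⁻ˣ)/4`, with `sgn 0 = 0`. -/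
noncomputable def G1 (x : ℝ) : ℝ := Real.sign x * (Real.exp x - Real.exp (-x)) / 4

/-- The optimal coefficients `C̊_β(z)` of the optimal interpolation formula in
`W₂^{(1,0)}(0,1)` with equally spaced nodes `x_β = βh`, `h = 1/N`. -/
noncomputable def optC1 (N : ℕ) (z : ℝ) (β : ℕ) : ℝ :=
  let h : ℝ := 1 / N;
  1 / (2 * (1 - Real.exp (2 * h))) *
    (Real.sign (z - h * β - h) * (Real.exp (h * β + 2 * h - z) - Real.exp (z - h * β))
      + Real.sign (z - h * β + h) * (Real.exp (h * β - z) - Real.exp (z - h * β + 2 * h))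
      + (1 + Real.exp (2 * h)) * Real.sign (z - h * β) *
          (Real.exp (z - h * β) - Real.exp (h * β - z)))

/-- The quadratic form `Q₁(C) = −(Σ_β Σ_γ C_β C_γ G₁(hβ−hγ) − 2 Σ_β C_β G₁(z−hβ))`,
the squared norm of the error functional in `W₂^{(1,0)*}(0,1)`. -/
noncomputable def Q1 (N : ℕ) (z : ℝ) (C : ℕ → ℝ) : ℝ :=
  let h : ℝ := 1 / N;
  -((∑ β ∈ Finset.range (N + 1), (∑ γ ∈ Finset.range (N + 1),
        C β * C γ * G1 (h * β - h * γ)))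
    - 2 * ∑ β ∈ Finset.range (N + 1), C β * G1 (z - h * β))

/-!
With `h = 1/N`, the coefficient `C̊_β(z)` is the second difference
`(G₁(t - h) + G₁(t + h) - 2 cosh h · G₁(t)) / sinh h` at `t = z - hβ`. As `G₁(t) = sinh |t| / 2`
and `sinh` is an eigenfunction of the second difference away from `0`, this is the hyperbolic hat
function `sinh (h - |t|)₊ / sinh h`, supported on the two nodes `α, α + 1` around `z`. There the
addition theorem for `sinh` yields the constraint and the stationarity equations
`∑_γ C̊_γ G₁(hβ - hγ) = G₁(z - hβ)` for every `β`, whence `Q₁(C) = Q₁(C̊) - ∑ D_β D_γ G₁(hβ - hγ)`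
with `D = C - C̊`. Since `G₁(x) = (cosh x - e^{-|x|}) / 2` and `D` is orthogonal to `e^{-hβ}`, the
`cosh` part of this form vanishes, and the remaining kernel `e^{-h|β-γ|}` is positive semidefinite:
its Gram form is a sum of squares of the AR(1) recursion `u_{k+1} = e^{-h} u_k + D_k`.
-/

open Finset Real

lemma G1_eq_sinh_abs (x : ℝ) : G1 x = sinh |x| / 2 := by
  rcases lt_trichotomy x 0 with hx | rfl | hx
  · rw [G1, Real.sign_of_neg hx, abs_of_neg hx, sinh_eq, neg_neg]; ring
  · simp [G1]
  · rw [G1, Real.sign_of_pos hx, abs_of_pos hx, sinh_eq]; ring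

lemma G1_neg (x : ℝ) : G1 (-x) = G1 x := by
  simp only [G1_eq_sinh_abs, abs_neg]

lemma G1_eq_cosh_sub (x : ℝ) : G1 x = (cosh x - exp (-|x|)) / 2 := by
  rw [G1_eq_sinh_abs, ← cosh_abs x, sinh_eq, cosh_eq]; ring

lemma G1_second_difference_of_nonneg {h t : ℝ} (hh : 0 ≤ h) (ht : 0 ≤ t) :
    G1 (t - h) + G1 (t + h) - 2 * cosh h * G1 t = sinh (max (h - |t|) 0) := by
  simp only [G1_eq_sinh_abs, abs_of_nonneg ht, abs_of_nonneg (add_nonneg ht hh)]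
  rcases le_total h t with hht | hth
  · rw [abs_of_nonneg (sub_nonneg.2 hht), max_eq_right (sub_nonpos.2 hht), sinh_zero, sinh_sub,
      sinh_add]
    ring
  · rw [abs_of_nonpos (sub_nonpos.2 hth), max_eq_left (sub_nonneg.2 hth), neg_sub, sinh_sub,
      sinh_add]
    ring

lemma G1_second_difference {h : ℝ} (hh : 0 ≤ h) (t : ℝ) :
    G1 (t - h) + G1 (t + h) - 2 * cosh h * G1 t = sinh (max (h - |t|) 0) := by
  rcases le_total 0 t with ht | ht
  · exact G1_second_difference_of_nonneg hh ht
  · have key := G1_second_difference_of_nonneg hh (neg_nonneg.2 ht)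
    rwa [show -t - h = -(t + h) by ring, show -t + h = -(t - h) by ring, G1_neg, G1_neg, G1_neg,
      abs_neg, add_comm (G1 (t + h))] at key

/-- The hyperbolic analogue of the piecewise linear hat function `max (1 - |t| / h) 0`. -/
noncomputable def sinhHat (h t : ℝ) : ℝ := sinh (max (h - |t|) 0) / sinh h

lemma optC1_eq_sinhHat {N : ℕ} (hN : 0 < N) (z : ℝ) (β : ℕ) :
    optC1 N z β = sinhHat (1 / N) (z - 1 / N * β) := by
  have hh : (0 : ℝ) < 1 / N := by positivity
  rw [sinhHat, ← G1_second_difference hh.le, optC1]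
  rw [show 1 / N * β + 2 * (1 / N) - z = 1 / N + 1 / N - (z - 1 / N * β) by ring,
    show z - 1 / N * β + 2 * (1 / N) = z - 1 / N * β + 1 / N + 1 / N by ring,
    show 1 / N * β - z = -(z - 1 / N * β) by ring, two_mul (1 / N : ℝ)]
  generalize (1 / N : ℝ) = h at hh ⊢
  generalize z - h * β = t
  have hE : 1 < exp h := one_lt_exp_iff.2 hh
  have hE0 : exp h ≠ 0 := (exp_pos h).ne'
  have hE1 : 1 - exp h ^ 2 ≠ 0 := by nlinarith
  have hE2 : exp h ^ 2 - 1 ≠ 0 := by nlinarith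
  simp only [G1, sinh_eq, cosh_eq, exp_add, exp_sub, exp_neg]
  field_simp
  ring

lemma exists_grid_cell {h z : ℝ} (hz : 0 ≤ z) {n : ℕ} (hzn : z ≤ h * (n + 1)) :
    ∃ α ≤ n, h * α ≤ z ∧ z ≤ h * α + h := by
  induction n with
  | zero => exact ⟨0, le_rfl, by simpa using hz, by simpa using hzn⟩
  | succ n ih =>
    rcases le_total z (h * (n + 1)) with hle | hge
    · obtain ⟨α, hαn, hα⟩ := ih hle
      exact ⟨α, hαn.trans n.le_succ, hα⟩
    · refine ⟨n + 1, le_rfl, ?_, ?_⟩ <;> push_cast at hzn ⊢ <;> linarith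

lemma sum_sinhHat_mul {h z : ℝ} (hh : 0 < h) {n α : ℕ} (hαn : α < n)
    (hlo : h * α ≤ z) (hhi : z ≤ h * α + h) (f : ℕ → ℝ) :
    ∑ β ∈ range (n + 1), sinhHat h (z - h * β) * f β
      = (sinh (h - (z - h * α)) * f α + sinh (z - h * α) * f (α + 1)) / sinh h := by
  rw [sum_eq_add α (α + 1) (by omega)]
  · rw [sinhHat, sinhHat, abs_of_nonneg (by linarith), abs_of_nonpos (by push_cast; linarith),
      max_eq_left (by linarith), max_eq_left (by push_cast; linarith)]
    push_cast
    ring_nf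
  · intro β _ hβ
    suffices h ≤ |z - h * β| by
      rw [sinhHat, max_eq_right (by linarith), sinh_zero, zero_div, zero_mul]
    rcases lt_or_gt_of_ne hβ.1 with hlt | hgt
    · have : (β : ℝ) + 1 ≤ α := by exact_mod_cast hlt
      rw [abs_of_nonneg (by nlinarith)]
      nlinarith
    · have : (α : ℝ) + 2 ≤ β := by exact_mod_cast (show α + 2 ≤ β by omega)
      rw [abs_of_nonpos (by nlinarith)]
      nlinarith
  all_goals exact fun hmem => absurd (mem_range.2 (by omega)) hmem

lemma sinh_mul_sinh_add_sinh_mul_sinh (a b s : ℝ) :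
    sinh a * sinh s + sinh b * sinh (s + a + b) = sinh (a + b) * sinh (s + b) := by
  simp only [sinh_eq, exp_add, exp_neg]
  field_simp
  ring

lemma sinh_mul_G1_add_sinh_mul_G1 {h z : ℝ} {α : ℕ} (hlo : h * α ≤ z) (hhi : z ≤ h * α + h)
    (β : ℕ) :
    sinh (h - (z - h * α)) * G1 (h * β - h * α) + sinh (z - h * α) * G1 (h * β - h * ↑(α + 1))
      = sinh h * G1 (z - h * β) := by
  have hh : 0 ≤ h := by linarith
  simp only [G1_eq_sinh_abs]
  push_cast
  rcases le_or_gt β α with hβα | hαβ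
  · have hβα : (β : ℝ) ≤ α := by exact_mod_cast hβα
    rw [abs_of_nonpos (by nlinarith), abs_of_nonpos (by nlinarith), abs_of_nonneg (by nlinarith)]
    have key := sinh_mul_sinh_add_sinh_mul_sinh (h - (z - h * α)) (z - h * α) (h * α - h * β)
    linear_combination (norm := ring_nf) key / 2
  · have hαβ : (α : ℝ) + 1 ≤ β := by exact_mod_cast hαβ
    rw [abs_of_nonneg (by nlinarith), abs_of_nonneg (by nlinarith), abs_of_nonpos (by nlinarith)]
    have key := sinh_mul_sinh_add_sinh_mul_sinh (z - h * α) (h - (z - h * α)) (h * β - h * α - h)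
    linear_combination (norm := ring_nf) key / 2

lemma sinh_mul_exp_add_sinh_mul_exp {h z : ℝ} (α : ℕ) :
    sinh (h - (z - h * α)) * exp (-(h * α)) + sinh (z - h * α) * exp (-(h * ↑(α + 1)))
      = sinh h * exp (-z) := by
  push_cast
  simp only [sinh_eq, mul_add, neg_add, neg_sub, exp_add, exp_sub, exp_neg]
  field_simp
  ring

lemma sum_sum_mul_sub_of_stationary {ι : Type*} (s : Finset ι) {K : ι → ι → ℝ}
    (hK : ∀ i j, K i j = K j i) {c g : ι → ℝ} (hc : ∀ i ∈ s, ∑ j ∈ s, c j * K i j = g i)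
    (c' : ι → ℝ) :
    ∑ i ∈ s, ∑ j ∈ s, c' i * c' j * K i j - 2 * ∑ i ∈ s, c' i * g i
      = ∑ i ∈ s, ∑ j ∈ s, (c' i - c i) * (c' j - c j) * K i j - ∑ i ∈ s, c i * g i := by
  have hrow (e : ι → ℝ) : ∑ i ∈ s, ∑ j ∈ s, e i * c j * K i j = ∑ i ∈ s, e i * g i :=
    sum_congr rfl fun i hi => by
      rw [← hc i hi, mul_sum]
      exact sum_congr rfl fun j _ => by ring
  have hcol (e : ι → ℝ) : ∑ i ∈ s, ∑ j ∈ s, c i * e j * K i j = ∑ i ∈ s, e i * g i := by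
    rw [sum_comm]
    exact sum_congr rfl fun j hj => by
      rw [← hc j hj, mul_sum]
      exact sum_congr rfl fun i _ => by rw [hK]; ring
  have hsplit : ∑ i ∈ s, ∑ j ∈ s, c' i * c' j * K i j
      = ∑ i ∈ s, ∑ j ∈ s, c i * c j * K i j + ∑ i ∈ s, ∑ j ∈ s, c i * (c' j - c j) * K i j
        + ∑ i ∈ s, ∑ j ∈ s, (c' i - c i) * c j * K i j
        + ∑ i ∈ s, ∑ j ∈ s, (c' i - c i) * (c' j - c j) * K i j := by
    simp only [← sum_add_distrib]
    exact sum_congr rfl fun i _ => sum_congr rfl fun j _ => by ring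
  rw [hsplit, hrow, hcol, hrow]
  simp only [sub_mul, sum_sub_distrib]
  ring

lemma sum_sum_mul_G1_of_sum_mul_exp_neg_eq_zero {ι : Type*} (s : Finset ι) (x d : ι → ℝ)
    (hd : ∑ i ∈ s, d i * exp (-x i) = 0) :
    ∑ i ∈ s, ∑ j ∈ s, d i * d j * G1 (x i - x j)
      = -(1 / 2) * ∑ i ∈ s, ∑ j ∈ s, d i * d j * exp (-|x i - x j|) := by
  have hsplit (i j : ι) : d i * d j * G1 (x i - x j)
      = d i * exp (x i) * (d j * exp (-x j)) / 4 + d i * exp (-x i) * (d j * exp (x j)) / 4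
        - 1 / 2 * (d i * d j * exp (-|x i - x j|)) := by
    simp only [G1_eq_cosh_sub, cosh_eq, neg_sub, exp_sub, exp_neg]
    field_simp
    ring
  simp only [hsplit, sum_sub_distrib, sum_add_distrib, ← sum_div, ← mul_sum, ← sum_mul, hd]
  ring

def discountedSum (r : ℝ) (d : ℕ → ℝ) : ℕ → ℝ
  | 0 => 0
  | k + 1 => r * discountedSum r d k + d k

lemma sum_mul_pow_sub_eq_mul_discountedSum (r : ℝ) (d : ℕ → ℝ) (n : ℕ) :
    ∑ j ∈ range n, d j * r ^ (n - j) = r * discountedSum r d n := by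
  induction n with
  | zero => simp [discountedSum]
  | succ n ih =>
    rw [sum_range_succ, Nat.add_sub_cancel_left, pow_one, discountedSum, mul_add, ← ih, mul_sum]
    congr 1
    · exact sum_congr rfl fun j hj => by
        rw [Nat.sub_add_comm (mem_range.1 hj).le, pow_succ]; ring
    · ring

lemma sum_sum_mul_pow_dist_eq (r : ℝ) (d : ℕ → ℝ) (n : ℕ) :
    ∑ i ∈ range n, ∑ j ∈ range n, d i * d j * r ^ Nat.dist i j
      = discountedSum r d n ^ 2 + (1 - r ^ 2) * ∑ k ∈ range n, discountedSum r d k ^ 2 := by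
  induction n with
  | zero => simp [discountedSum]
  | succ n ih =>
    have hrow : ∑ j ∈ range n, d n * d j * r ^ Nat.dist n j
        = d n * (r * discountedSum r d n) := by
      rw [← sum_mul_pow_sub_eq_mul_discountedSum, mul_sum]
      exact sum_congr rfl fun j hj => by
        rw [Nat.dist_eq_sub_of_le_right (mem_range.1 hj).le]; ring
    have hcol : ∑ i ∈ range n, d i * d n * r ^ Nat.dist i n
        = d n * (r * discountedSum r d n) := by
      rw [← hrow]
      exact sum_congr rfl fun i _ => by rw [Nat.dist_comm]; ring
    simp only [sum_range_succ, sum_add_distrib, hrow, hcol, ih, Nat.dist_self, pow_zero,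
      discountedSum]
    ring

lemma sum_sum_mul_pow_dist_nonneg {r : ℝ} (hr : r ^ 2 ≤ 1) (d : ℕ → ℝ) (n : ℕ) :
    0 ≤ ∑ i ∈ range n, ∑ j ∈ range n, d i * d j * r ^ Nat.dist i j := by
  rw [sum_sum_mul_pow_dist_eq]
  have := sum_nonneg fun k (_ : k ∈ range n) => sq_nonneg (discountedSum r d k)
  nlinarith [sq_nonneg (discountedSum r d n)]

lemma exp_neg_abs_mul_sub_mul (h : ℝ) (hh : 0 ≤ h) (i j : ℕ) :
    exp (-|h * i - h * j|) = exp (-h) ^ Nat.dist i j := by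
  rw [← exp_nat_mul]
  congr 1
  rcases le_total i j with hij | hji
  · rw [Nat.dist_eq_sub_of_le hij, Nat.cast_sub hij,
      abs_of_nonpos (by nlinarith [(Nat.cast_le (α := ℝ)).2 hij])]
    ring
  · rw [Nat.dist_eq_sub_of_le_right hji, Nat.cast_sub hji,
      abs_of_nonneg (by nlinarith [(Nat.cast_le (α := ℝ)).2 hji])]
    ring

lemma sum_sum_mul_G1_grid_nonpos {h : ℝ} (hh : 0 ≤ h) {n : ℕ} {d : ℕ → ℝ}
    (hd : ∑ i ∈ range n, d i * exp (-(h * i)) = 0) :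
    ∑ i ∈ range n, ∑ j ∈ range n, d i * d j * G1 (h * i - h * j) ≤ 0 := by
  have hr : exp (-h) ^ 2 ≤ 1 := pow_le_one₀ (exp_pos _).le (exp_le_one_iff.2 (neg_nonpos.2 hh))
  have hpsd := sum_sum_mul_pow_dist_nonneg hr d n
  rw [sum_sum_mul_G1_of_sum_mul_exp_neg_eq_zero (range n) (fun i : ℕ => h * i) d hd]
  simp only [exp_neg_abs_mul_sub_mul h hh]
  linarith

lemma sum_optC1_mul {N α : ℕ} (hαN : α < N) {z : ℝ} (hlo : 1 / N * α ≤ z)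
    (hhi : z ≤ 1 / N * α + 1 / N) (f : ℕ → ℝ) :
    ∑ β ∈ range (N + 1), optC1 N z β * f β
      = (sinh (1 / N - (z - 1 / N * α)) * f α + sinh (z - 1 / N * α) * f (α + 1))
        / sinh (1 / N) := by
  have hN : 0 < N := Nat.zero_lt_of_lt hαN
  simp only [optC1_eq_sinhHat hN]
  exact sum_sinhHat_mul (by positivity) hαN hlo hhi f

lemma sinh_one_div_natCast_ne_zero {N : ℕ} (hN : 0 < N) : sinh (1 / N : ℝ) ≠ 0 :=
  (sinh_pos_iff.2 (by positivity)).ne'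

lemma sum_optC1_mul_exp_neg {N α : ℕ} (hαN : α < N) {z : ℝ} (hlo : 1 / N * α ≤ z)
    (hhi : z ≤ 1 / N * α + 1 / N) :
    ∑ β ∈ range (N + 1), optC1 N z β * exp (-(1 / N * β)) = exp (-z) := by
  rw [sum_optC1_mul hαN hlo hhi, sinh_mul_exp_add_sinh_mul_exp,
    mul_div_cancel_left₀ _ (sinh_one_div_natCast_ne_zero (Nat.zero_lt_of_lt hαN))]

lemma sum_optC1_mul_G1 {N α : ℕ} (hαN : α < N) {z : ℝ} (hlo : 1 / N * α ≤ z)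
    (hhi : z ≤ 1 / N * α + 1 / N) (β : ℕ) :
    ∑ γ ∈ range (N + 1), optC1 N z γ * G1 (1 / N * β - 1 / N * γ) = G1 (z - 1 / N * β) := by
  rw [sum_optC1_mul hαN hlo hhi, sinh_mul_G1_add_sinh_mul_G1 hlo hhi,
    mul_div_cancel_left₀ _ (sinh_one_div_natCast_ne_zero (Nat.zero_lt_of_lt hαN))]

lemma Q1_eq_sub_of_stationary {N : ℕ} {z : ℝ} {c : ℕ → ℝ}
    (hc : ∀ β ∈ range (N + 1),
      ∑ γ ∈ range (N + 1), c γ * G1 (1 / N * β - 1 / N * γ) = G1 (z - 1 / N * β))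
    (C : ℕ → ℝ) :
    Q1 N z C = ∑ β ∈ range (N + 1), c β * G1 (z - 1 / N * β)
      - ∑ β ∈ range (N + 1), ∑ γ ∈ range (N + 1),
          (C β - c β) * (C γ - c γ) * G1 (1 / N * β - 1 / N * γ) := by
  simp only [Q1]
  rw [sum_sum_mul_sub_of_stationary _ (fun i j => by rw [← G1_neg, neg_sub]) hc C]
  ring

/-- For every `N ≥ 1`, `h = 1/N` and every `z ∈ [0,1]`, the minimum of `Q₁` over all
`C ∈ ℝ^{N+1}` with `Σ_β C_β e^{−hβ} = e^{−z}` is attained at `C = C̊(z)` and equals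
`(1/4)·Σ_β C̊_β(z)·sgn(z−hβ)·(e^{z−hβ} − e^{hβ−z})`, the squared norm of the error
functional of the optimal interpolation formula on `W₂^{(1,0)}(0,1)`. -/
theorem norm_error_functional_m1 (N : ℕ) (hN : 1 ≤ N) (z : ℝ)
    (hz : z ∈ Set.Icc (0 : ℝ) 1) :
    (∑ β ∈ Finset.range (N + 1), optC1 N z β * Real.exp (-((1 / N : ℝ) * β))
        = Real.exp (-z)) ∧
    (∀ C : ℕ → ℝ,
      (∑ β ∈ Finset.range (N + 1), C β * Real.exp (-((1 / N : ℝ) * β)) = Real.exp (-z)) →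
        Q1 N z (fun β => optC1 N z β) ≤ Q1 N z C) ∧
    Q1 N z (fun β => optC1 N z β)
      = 1 / 4 * ∑ β ∈ Finset.range (N + 1), optC1 N z β *
          Real.sign (z - (1 / N : ℝ) * β) *
          (Real.exp (z - (1 / N : ℝ) * β) - Real.exp ((1 / N : ℝ) * β - z)) := by
  obtain ⟨n, rfl⟩ : ∃ n, N = n + 1 := ⟨N - 1, by omega⟩
  have hstep : (1 / ↑(n + 1) : ℝ) * (n + 1) = 1 := by push_cast; field_simp
  obtain ⟨α, hαn, hlo, hhi⟩ := exists_grid_cell hz.1 (hstep ▸ hz.2)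
  have hαN : α < n + 1 := Nat.lt_succ_of_le hαn
  have hconstr := sum_optC1_mul_exp_neg hαN hlo hhi
  have hQ := Q1_eq_sub_of_stationary fun β _ => sum_optC1_mul_G1 hαN hlo hhi β
  refine ⟨hconstr, fun C hC => ?_, ?_⟩
  · have hD := sum_sum_mul_G1_grid_nonpos (h := 1 / ↑(n + 1)) (n := n + 1 + 1)
      (d := fun β => C β - optC1 (n + 1) z β) (by positivity)
      (by simp only [sub_mul, sum_sub_distrib, hC, hconstr, sub_self])
    rw [hQ, hQ]
    simp only [sub_self, zero_mul, sum_const_zero]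
    linarith
  · rw [hQ, mul_sum]
    simp only [sub_self, zero_mul, sum_const_zero, sub_zero]
    exact sum_congr rfl fun β _ => by rw [G1, neg_sub]; ring
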